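/- Mutual information version of the distance-based Fano inequality: with X uniform on finite S, X̂ taking values in S, ρ symmetric, and N_t^max = max_x |{x̂ : ρ(x,x̂) ≤ t}| < |S|, the probability P_t = P(ρ(X, X̂) > t) in any Markov chain X → Y → X̂ satisfies P_t ≥ 1 - (I(X; Y) + h(P_t)) / log(|S| / N_t^max). -/

import Mathlib

open Finset

open Classical in
noncomputable def pr {Ω : Type*} [Fintype Ω] (μ : Ω → ℝ) (p : Ω → Prop) : ℝ :=
  ∑ ω ∈ Finset.univ.filter p, μ ω

def IsPMF {Ω : Type*} [Fintype Ω] (μ : Ω → ℝ) : Prop :=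
  (∀ ω, 0 ≤ μ ω) ∧ ∑ ω, μ ω = 1

noncomputable def mutInfo {Ω A B : Type*} [Fintype Ω] [Fintype A] [Fintype B]
    (μ : Ω → ℝ) (X : Ω → A) (Y : Ω → B) : ℝ :=
  ∑ a : A, ∑ b : B, pr μ (fun ω => X ω = a ∧ Y ω = b) *
    Real.log (pr μ (fun ω => X ω = a ∧ Y ω = b) /
      (pr μ (fun ω => X ω = a) * pr μ (fun ω => Y ω = b)))

noncomputable def ent {Ω A : Type*} [Fintype Ω] [Fintype A] (μ : Ω → ℝ) (X : Ω → A) : ℝ :=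
  -∑ a : A, pr μ (fun ω => X ω = a) * Real.log (pr μ (fun ω => X ω = a))

noncomputable def condEnt {Ω A B : Type*} [Fintype Ω] [Fintype A] [Fintype B]
    (μ : Ω → ℝ) (X : Ω → A) (Y : Ω → B) : ℝ :=
  ent μ (fun ω => (X ω, Y ω)) - ent μ Y

noncomputable def binEnt (p : ℝ) : ℝ :=
  -(p * Real.log p) - (1 - p) * Real.log (1 - p)

/-- `X → Y → Z` is a Markov chain: `X` and `Z` are conditionally independent given `Y`. -/
def MarkovChain {Ω A B C : Type*} [Fintype Ω]
    (μ : Ω → ℝ) (X : Ω → A) (Y : Ω → B) (Z : Ω → C) : Prop :=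
  ∀ (a : A) (b : B) (c : C),
    pr μ (fun ω => X ω = a ∧ Y ω = b ∧ Z ω = c) * pr μ (fun ω => Y ω = b) =
      pr μ (fun ω => X ω = a ∧ Y ω = b) * pr μ (fun ω => Y ω = b ∧ Z ω = c)

open Classical in
noncomputable def ballCard {A : Type*} [Fintype A] (ρ : A → A → ℝ) (t : ℝ) (x : A) : ℕ :=
  (Finset.univ.filter fun x' => ρ x x' ≤ t).card

noncomputable def Ntmax {A : Type*} [Fintype A] (ρ : A → A → ℝ) (t : ℝ) : ℕ :=
  Finset.univ.sup (ballCard ρ t)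

/-!
Gibbs' inequality does all the work. For a Markov chain `X → Y → Z`, `I(X;Y) - I(X;Z)` is the
relative entropy of the law of `(X, Y, Z)` with respect to `P(x,z) P(y,z) / P(z)`, a measure of
the same mass, hence nonnegative (data processing). For `X` uniform on `S`, a relation `R` and
`P = P(¬ R(X, X̂))`, compare the law of `(X, X̂)` with `P(x̂) r(x, x̂)`, where `r = (1 - P) / K`
on `R` and `r = P / |S|` off it. If every `x̂` is `R`-related to at most `K` points this has mass
at most one, and Gibbs' inequality becomes `I(X;X̂) ≥ (1 - P) log (|S| / K) - h(P)`. For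
`R = {ρ ≤ t}` with `ρ` symmetric, `K = N_t^max` will do.
-/

open Real

theorem sub_le_mul_log_div {p q : ℝ} (hp : 0 < p) (hq : 0 < q) : p - q ≤ p * log (p / q) := by
  have h := one_sub_inv_le_log_of_pos (div_pos hp hq)
  rw [inv_div] at h
  calc p - q = p * (1 - q / p) := by field_simp
    _ ≤ p * log (p / q) := mul_le_mul_of_nonneg_left h hp.le

theorem sum_mul_le_sum_mul_of_sub_eq_log_div {ι : Type*} [Fintype ι] {p q f g : ι → ℝ}
    (hp : ∀ i, 0 ≤ p i) (hq : ∀ i, 0 ≤ q i) (hpq : ∀ i, 0 < p i → 0 < q i)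
    (hsum : ∑ i, q i ≤ ∑ i, p i) (hfg : ∀ i, 0 < p i → f i - g i = log (p i / q i)) :
    ∑ i, p i * g i ≤ ∑ i, p i * f i := by
  have hterm : ∀ i, p i - q i ≤ p i * f i - p i * g i := by
    intro i
    rcases (hp i).eq_or_lt with h0 | hpos
    · simp [← h0, hq i]
    · rw [← mul_sub, hfg i hpos]
      exact sub_le_mul_log_div hpos (hpq i hpos)
  have := Finset.sum_le_sum fun i (_ : i ∈ univ) => hterm i
  rw [Finset.sum_sub_distrib, Finset.sum_sub_distrib] at this
  linarith

theorem mul_log_sub_binEnt (P : ℝ) {y : ℝ} (hy : y ≠ 0) :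
    (1 - P) * log y - binEnt P = (1 - P) * log (y * (1 - P)) + P * log P := by
  rcases eq_or_ne (1 - P) 0 with h | h
  · simp [binEnt, h]
  · rw [binEnt, log_mul hy h]
    ring

section Probability

open Classical

variable {Ω A B C : Type*} [Fintype Ω] [Fintype A] [Fintype B] [Fintype C] (μ : Ω → ℝ)

theorem pr_congr {p q : Ω → Prop} (h : ∀ ω, p ω ↔ q ω) : pr μ p = pr μ q := by
  simp only [pr, h]

theorem pr_nonneg (hμ : ∀ ω, 0 ≤ μ ω) (p : Ω → Prop) : 0 ≤ pr μ p :=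
  Finset.sum_nonneg fun ω _ => hμ ω

theorem pr_mono (hμ : ∀ ω, 0 ≤ μ ω) {p q : Ω → Prop} (h : ∀ ω, p ω → q ω) :
    pr μ p ≤ pr μ q :=
  Finset.sum_le_sum_of_subset_of_nonneg (Finset.monotone_filter_right _ fun ω _ => h ω)
    fun ω _ _ => hμ ω

theorem pr_pos_of_imp (hμ : ∀ ω, 0 ≤ μ ω) {p q : Ω → Prop} (h : ∀ ω, p ω → q ω)
    (hp : 0 < pr μ p) : 0 < pr μ q :=
  hp.trans_le (pr_mono μ hμ h)

theorem pr_eq_one_of_forall (hμ : IsPMF μ) {p : Ω → Prop} (h : ∀ ω, p ω) : pr μ p = 1 := by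
  rw [pr, Finset.filter_true_of_mem fun ω _ => h ω, hμ.2]

theorem pr_not (hμ : IsPMF μ) (p : Ω → Prop) : pr μ (fun ω => ¬ p ω) = 1 - pr μ p := by
  rw [eq_sub_iff_add_eq, add_comm, ← hμ.2]
  unfold pr
  convert Finset.sum_filter_add_sum_filter_not univ p μ

theorem sum_pr_and_eq (p : Ω → Prop) (Z : Ω → C) :
    ∑ c, pr μ (fun ω => p ω ∧ Z ω = c) = pr μ p := by
  simp only [pr, Finset.sum_filter]
  rw [Finset.sum_comm]
  refine Finset.sum_congr rfl fun ω _ => ?_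
  by_cases hp : p ω <;> simp [hp]

theorem sum_pr_eq_and (Z : Ω → C) (p : Ω → Prop) :
    ∑ c, pr μ (fun ω => Z ω = c ∧ p ω) = pr μ p :=
  (Finset.sum_congr rfl fun _ _ => pr_congr μ fun _ => and_comm).trans (sum_pr_and_eq μ p Z)

theorem pr_eq_sum_sum_ite (X : Ω → A) (Z : Ω → C) (S : A → C → Prop)
    [∀ a c, Decidable (S a c)] :
    pr μ (fun ω => S (X ω) (Z ω)) =
      ∑ a, ∑ c, if S a c then pr μ (fun ω => X ω = a ∧ Z ω = c) else 0 := by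
  rw [← sum_pr_and_eq μ _ X]
  refine Finset.sum_congr rfl fun a _ => ?_
  rw [← sum_pr_and_eq μ _ Z]
  refine Finset.sum_congr rfl fun c _ => ?_
  split_ifs with h
  · exact pr_congr μ fun ω =>
      ⟨fun ⟨⟨_, ha⟩, hc⟩ => ⟨ha, hc⟩, fun ⟨ha, hc⟩ => ⟨⟨ha ▸ hc ▸ h, ha⟩, hc⟩⟩
  · rw [pr_congr μ (q := fun _ => False) fun ω => ?_]
    · simp [pr]
    · exact iff_false_intro fun ⟨⟨hS, ha⟩, hc⟩ => h (ha ▸ hc ▸ hS)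

theorem sum_sum_pr_mul_ite (X : Ω → A) (Z : Ω → C) (S : A → C → Prop)
    [∀ a c, Decidable (S a c)] (α β : ℝ) :
    ∑ a, ∑ c, pr μ (fun ω => X ω = a ∧ Z ω = c) * (if S a c then α else β) =
      pr μ (fun ω => S (X ω) (Z ω)) * α + pr μ (fun ω => ¬ S (X ω) (Z ω)) * β := by
  rw [pr_eq_sum_sum_ite μ X Z S, pr_eq_sum_sum_ite μ X Z fun a c => ¬ S a c, Finset.sum_mul,
    Finset.sum_mul, ← Finset.sum_add_distrib]
  refine Finset.sum_congr rfl fun a _ => ?_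
  rw [Finset.sum_mul, Finset.sum_mul, ← Finset.sum_add_distrib]
  refine Finset.sum_congr rfl fun c _ => ?_
  split_ifs <;> ring

theorem sum_sum_pr_mul_le (hμ : ∀ ω, 0 ≤ μ ω) (X : Ω → A) (Z : Ω → C) (w : A → C → ℝ)
    (hw : ∀ c, ∑ a, w a c ≤ 1) :
    ∑ a, ∑ c, pr μ (fun ω => Z ω = c) * w a c ≤
      ∑ a, ∑ c, pr μ (fun ω => X ω = a ∧ Z ω = c) := by
  rw [Finset.sum_comm, Finset.sum_comm (f := fun a c => pr μ (fun ω => X ω = a ∧ Z ω = c))]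
  refine Finset.sum_le_sum fun c _ => ?_
  rw [← Finset.mul_sum, sum_pr_eq_and]
  exact mul_le_of_le_one_right (pr_nonneg μ hμ _) (hw c)

theorem sum_mul_log_div_le_mutInfo (hμ : ∀ ω, 0 ≤ μ ω) (X : Ω → A) (Y : Ω → B)
    (q : A → B → ℝ) (hq : ∀ a b, 0 ≤ q a b)
    (hpq : ∀ a b, 0 < pr μ (fun ω => X ω = a ∧ Y ω = b) → 0 < q a b)
    (hsum : ∑ a, ∑ b, q a b ≤ ∑ a, ∑ b, pr μ (fun ω => X ω = a ∧ Y ω = b)) :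
    ∑ a, ∑ b, pr μ (fun ω => X ω = a ∧ Y ω = b) *
        log (q a b / (pr μ (fun ω => X ω = a) * pr μ (fun ω => Y ω = b))) ≤
      mutInfo μ X Y := by
  unfold mutInfo
  simp only [← Fintype.sum_prod_type'] at hsum ⊢
  refine sum_mul_le_sum_mul_of_sub_eq_log_div (fun _ => pr_nonneg μ hμ _) (fun x => hq x.1 x.2)
    (fun x => hpq x.1 x.2) hsum fun ⟨a, b⟩ hp => ?_
  have hX := pr_pos_of_imp μ hμ (fun ω h => h.1) hp
  have hY := pr_pos_of_imp μ hμ (fun ω h => h.2) hp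
  have hq := hpq a b hp
  rw [← log_div (by positivity) (by positivity)]
  congr 1
  field_simp

theorem sum_sum_pr_mul_log_le_mutInfo_of_uniform (hμ : ∀ ω, 0 ≤ μ ω) (X Xh : Ω → A)
    (hunif : ∀ a : A, pr μ (fun ω => X ω = a) = 1 / Fintype.card A) (r : A → A → ℝ)
    (hr0 : ∀ a c, 0 ≤ r a c) (hr : ∀ c, ∑ a, r a c ≤ 1)
    (hpos : ∀ a c, 0 < pr μ (fun ω => X ω = a ∧ Xh ω = c) → 0 < r a c) :
    ∑ a, ∑ c, pr μ (fun ω => X ω = a ∧ Xh ω = c) * log (Fintype.card A * r a c) ≤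
      mutInfo μ X Xh := by
  refine le_trans (le_of_eq ?_) (sum_mul_log_div_le_mutInfo μ hμ X Xh
    (fun a c => pr μ (fun ω => Xh ω = c) * r a c)
    (fun a c => mul_nonneg (pr_nonneg μ hμ _) (hr0 a c))
    (fun a c hp => mul_pos (pr_pos_of_imp μ hμ (fun ω h => h.2) hp) (hpos a c hp))
    (sum_sum_pr_mul_le μ hμ X Xh r hr))
  refine Finset.sum_congr rfl fun a _ => Finset.sum_congr rfl fun c _ => ?_
  rcases (pr_nonneg μ hμ (fun ω => X ω = a ∧ Xh ω = c)).eq_or_lt with hp | hp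
  · simp [← hp]
  have hXh : 0 < pr μ (fun ω => Xh ω = c) := pr_pos_of_imp μ hμ (fun ω h => h.2) hp
  rw [hunif]
  field_simp

theorem sum_sum_pr_mul_eq_sum_triple_left (X : Ω → A) (Y : Ω → B) (Z : Ω → C)
    (F : A → B → ℝ) :
    ∑ a, ∑ b, pr μ (fun ω => X ω = a ∧ Y ω = b) * F a b =
      ∑ a, ∑ b, ∑ c, pr μ (fun ω => X ω = a ∧ Y ω = b ∧ Z ω = c) * F a b := by
  refine Finset.sum_congr rfl fun a _ => Finset.sum_congr rfl fun b _ => ?_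
  rw [← Finset.sum_mul, ← sum_pr_and_eq μ _ Z]
  exact congrArg (· * F a b) (Finset.sum_congr rfl fun c _ => pr_congr μ fun ω => and_assoc)

theorem sum_sum_pr_mul_eq_sum_triple_outer (X : Ω → A) (Y : Ω → B) (Z : Ω → C)
    (G : A → C → ℝ) :
    ∑ a, ∑ c, pr μ (fun ω => X ω = a ∧ Z ω = c) * G a c =
      ∑ a, ∑ b, ∑ c, pr μ (fun ω => X ω = a ∧ Y ω = b ∧ Z ω = c) * G a c := by
  refine Finset.sum_congr rfl fun a _ => ?_
  rw [Finset.sum_comm]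
  refine Finset.sum_congr rfl fun c _ => ?_
  rw [← Finset.sum_mul, ← sum_pr_and_eq μ _ Y]
  exact congrArg (· * G a c) (Finset.sum_congr rfl fun b _ => pr_congr μ fun ω => by tauto)

theorem sum_triple_pr_mul_pr_div_pr (X : Ω → A) (Y : Ω → B) (Z : Ω → C) :
    ∑ a, ∑ b, ∑ c, pr μ (fun ω => X ω = a ∧ Z ω = c) * pr μ (fun ω => Y ω = b ∧ Z ω = c) /
        pr μ (fun ω => Z ω = c) =
      ∑ a, ∑ b, ∑ c, pr μ (fun ω => X ω = a ∧ Y ω = b ∧ Z ω = c) := by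
  have hcomm : ∀ F : A → B → C → ℝ, ∑ a, ∑ b, ∑ c, F a b c = ∑ c, ∑ a, ∑ b, F a b c :=
    fun F => (Finset.sum_congr rfl fun a _ => Finset.sum_comm).trans Finset.sum_comm
  rw [hcomm, hcomm]
  refine Finset.sum_congr rfl fun c _ => ?_
  rw [Finset.sum_comm (f := fun a b => pr μ (fun ω => X ω = a ∧ Y ω = b ∧ Z ω = c))]
  simp only [← Finset.sum_div, ← Finset.mul_sum, ← Finset.sum_mul, sum_pr_eq_and,
    mul_self_div_self]

theorem mutInfo_le_of_markovChain (hμ : ∀ ω, 0 ≤ μ ω) (X : Ω → A) (Y : Ω → B) (Z : Ω → C)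
    (hMC : MarkovChain μ X Y Z) : mutInfo μ X Z ≤ mutInfo μ X Y := by
  unfold mutInfo
  rw [sum_sum_pr_mul_eq_sum_triple_left μ X Y Z, sum_sum_pr_mul_eq_sum_triple_outer μ X Y Z]
  have hmass := (sum_triple_pr_mul_pr_div_pr μ X Y Z).le
  simp only [← Fintype.sum_prod_type'] at hmass ⊢
  refine sum_mul_le_sum_mul_of_sub_eq_log_div (fun _ => pr_nonneg μ hμ _)
    (fun _ => div_nonneg (mul_nonneg (pr_nonneg μ hμ _) (pr_nonneg μ hμ _)) (pr_nonneg μ hμ _))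
    ?_ hmass ?_
  · rintro ⟨a, b, c⟩ hw
    have hXZ : 0 < pr μ (fun ω => X ω = a ∧ Z ω = c) := pr_pos_of_imp μ hμ (by tauto) hw
    have hYZ : 0 < pr μ (fun ω => Y ω = b ∧ Z ω = c) := pr_pos_of_imp μ hμ (by tauto) hw
    have hZ : 0 < pr μ (fun ω => Z ω = c) := pr_pos_of_imp μ hμ (by tauto) hw
    positivity
  · rintro ⟨a, b, c⟩ hw
    have hXY : 0 < pr μ (fun ω => X ω = a ∧ Y ω = b) := pr_pos_of_imp μ hμ (by tauto) hw
    have hXZ : 0 < pr μ (fun ω => X ω = a ∧ Z ω = c) := pr_pos_of_imp μ hμ (by tauto) hw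
    have hYZ : 0 < pr μ (fun ω => Y ω = b ∧ Z ω = c) := pr_pos_of_imp μ hμ (by tauto) hw
    have hX : 0 < pr μ (fun ω => X ω = a) := pr_pos_of_imp μ hμ (by tauto) hw
    have hY : 0 < pr μ (fun ω => Y ω = b) := pr_pos_of_imp μ hμ (by tauto) hw
    have hZ : 0 < pr μ (fun ω => Z ω = c) := pr_pos_of_imp μ hμ (by tauto) hw
    rw [← log_div (by positivity) (by positivity)]
    congr 1
    field_simp
    linear_combination -(hMC a b c)

end Probability

theorem sum_ite_div_le_add {A : Type*} [Fintype A] (R : A → Prop) [DecidablePred R] {K : ℕ}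
    (hR : #{a | R a} ≤ K) {u v : ℝ} (hu : 0 ≤ u) (hv : 0 ≤ v) :
    ∑ a, (if R a then u / K else v / Fintype.card A) ≤ u + v := by
  have hin : ((univ.filter R).card : ℝ) / K ≤ 1 :=
    div_le_one_of_le₀ (by exact_mod_cast hR) (Nat.cast_nonneg _)
  have hout : ((univ.filter fun a => ¬ R a).card : ℝ) / Fintype.card A ≤ 1 :=
    div_le_one_of_le₀ (by exact_mod_cast Finset.card_filter_le _ _) (Nat.cast_nonneg _)
  rw [Finset.sum_ite, Finset.sum_const, Finset.sum_const, nsmul_eq_mul, nsmul_eq_mul]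
  calc _ = ((univ.filter R).card : ℝ) / K * u +
        ((univ.filter fun a => ¬ R a).card : ℝ) / Fintype.card A * v := by ring
    _ ≤ 1 * u + 1 * v := by gcongr
    _ = u + v := by ring

theorem relational_fano {Ω A : Type*} [Fintype Ω] [Fintype A] (μ : Ω → ℝ) (hμ : IsPMF μ)
    (X Xh : Ω → A) (hunif : ∀ a : A, pr μ (fun ω => X ω = a) = 1 / Fintype.card A)
    (R : A → A → Prop) [DecidableRel R] {K : ℕ} (hK : 0 < K) (hR : ∀ c, #{a | R a c} ≤ K) :
    (1 - pr μ (fun ω => ¬ R (X ω) (Xh ω))) * log (Fintype.card A / K) -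
      binEnt (pr μ (fun ω => ¬ R (X ω) (Xh ω))) ≤ mutInfo μ X Xh := by
  set P := pr μ (fun ω => ¬ R (X ω) (Xh ω))
  have hQ : pr μ (fun ω => R (X ω) (Xh ω)) = 1 - P :=
    (sub_sub_cancel 1 _).symm.trans (congrArg (1 - ·) (pr_not μ hμ _).symm)
  have hP0 : 0 ≤ P := pr_nonneg μ hμ.1 _
  have hQ0 : 0 ≤ 1 - P := hQ ▸ pr_nonneg μ hμ.1 _
  have hN : 0 < (Fintype.card A : ℝ) := by
    obtain ⟨ω, -, -⟩ := Finset.exists_ne_zero_of_sum_ne_zero (hμ.2 ▸ one_ne_zero : ∑ ω, μ ω ≠ 0)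
    exact Nat.cast_pos.2 (Fintype.card_pos_iff.2 ⟨X ω⟩)
  set r : A → A → ℝ := fun a c => if R a c then (1 - P) / K else P / Fintype.card A
  have hr_nonneg : ∀ a c, 0 ≤ r a c := fun a c => by
    simp only [r]
    split_ifs <;> positivity
  have hr_pos : ∀ a c, 0 < pr μ (fun ω => X ω = a ∧ Xh ω = c) → 0 < r a c := by
    intro a c hp
    by_cases h : R a c
    · have : 0 < 1 - P := hQ ▸ pr_pos_of_imp μ hμ.1 (by rintro ω ⟨rfl, rfl⟩; exact h) hp
      simp only [r, if_pos h]
      positivity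
    · have : 0 < P := pr_pos_of_imp μ hμ.1 (by rintro ω ⟨rfl, rfl⟩; exact h) hp
      simp only [r, if_neg h]
      positivity
  have hlog : ∀ a c, log (Fintype.card A * r a c) =
      if R a c then log (Fintype.card A / K * (1 - P)) else log P := by
    intro a c
    simp only [r]
    split_ifs
    · ring_nf
    · rw [mul_div_cancel₀ P hN.ne']
  have hlower := sum_sum_pr_mul_log_le_mutInfo_of_uniform μ hμ.1 X Xh hunif r hr_nonneg
    (fun c => (sum_ite_div_le_add (R · c) (hR c) hQ0 hP0).trans_eq (sub_add_cancel 1 P)) hr_pos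
  simp only [hlog, sum_sum_pr_mul_ite, hQ] at hlower
  rw [mul_log_sub_binEnt P (by positivity)]
  exact hlower

section Balls

variable {A : Type*} [Fintype A] (ρ : A → A → ℝ) (t : ℝ)

theorem ballCard_le_Ntmax (x : A) : ballCard ρ t x ≤ Ntmax ρ t :=
  Finset.le_sup (Finset.mem_univ x)

theorem lt_of_Ntmax_eq_zero (h : Ntmax ρ t = 0) (x x' : A) : t < ρ x x' := by
  have hx := ballCard_le_Ntmax ρ t x
  rw [h, Nat.le_zero, ballCard, Finset.card_eq_zero, Finset.filter_eq_empty_iff] at hx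
  exact lt_of_not_ge (hx (Finset.mem_univ x'))

theorem card_filter_le_Ntmax (hsymm : ∀ x x', ρ x x' = ρ x' x) (c : A) :
    #{a | ρ a c ≤ t} ≤ Ntmax ρ t := by
  have := ballCard_le_Ntmax ρ t c
  simp only [ballCard, hsymm c] at this
  convert this

end Balls

theorem distance_based_fano_mutual_info_general {Ω A B : Type*} [Fintype Ω] [Fintype A] [Fintype B]
    (μ : Ω → ℝ) (hμ : IsPMF μ) (X : Ω → A) (Y : Ω → B) (Xh : Ω → A)
    (hMC : MarkovChain μ X Y Xh)
    (hunif : ∀ a : A, pr μ (fun ω => X ω = a) = 1 / Fintype.card A)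
    (ρ : A → A → ℝ) (hsymm : ∀ x x', ρ x x' = ρ x' x) (t : ℝ)
    (hNmax : Ntmax ρ t < Fintype.card A) :
    pr μ (fun ω => ρ (X ω) (Xh ω) > t) ≥
      1 - (mutInfo μ X Y + binEnt (pr μ (fun ω => ρ (X ω) (Xh ω) > t))) /
        Real.log ((Fintype.card A : ℝ) / (Ntmax ρ t : ℝ)) := by
  rcases (Nat.zero_le (Ntmax ρ t)).eq_or_lt with hK | hK
  · -- every pair is farther apart than `t`, and the bound is `1` since `log (|S| / 0) = 0`
    have hP : pr μ (fun ω => ρ (X ω) (Xh ω) > t) = 1 :=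
      pr_eq_one_of_forall μ hμ fun ω => lt_of_Ntmax_eq_zero ρ t hK.symm _ _
    simp [hP, ← hK]
  · have hP : pr μ (fun ω => ρ (X ω) (Xh ω) > t) = pr μ (fun ω => ¬ ρ (X ω) (Xh ω) ≤ t) :=
      pr_congr μ fun ω => not_le.symm
    have hfano := relational_fano μ hμ X Xh hunif (fun a c => ρ a c ≤ t) hK
      (card_filter_le_Ntmax ρ t hsymm)
    have hdpi := mutInfo_le_of_markovChain μ hμ.1 X Y Xh hMC
    have hlog : 0 < log (Fintype.card A / Ntmax ρ t) :=
      log_pos ((one_lt_div (Nat.cast_pos.2 hK)).2 (Nat.cast_lt.2 hNmax))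
    rw [hP, ge_iff_le, sub_le_comm, le_div_iff₀ hlog]
    linarith

theorem distance_based_fano_mutual_info {Ω A B : Type*} [Fintype Ω] [Fintype A] [Fintype B]
    [DecidableEq A]
    (μ : Ω → ℝ) (hμ : IsPMF μ) (X : Ω → A) (Y : Ω → B) (Xh : Ω → A)
    (hMC : MarkovChain μ X Y Xh)
    (hcard : 2 ≤ Fintype.card A)
    (hunif : ∀ a : A, pr μ (fun ω => X ω = a) = 1 / Fintype.card A)
    (ρ : A → A → ℝ) (hsymm : ∀ x x', ρ x x' = ρ x' x) (t : ℝ) (ht : 0 ≤ t)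
    (hNmax : Ntmax ρ t < Fintype.card A) :
    pr μ (fun ω => ρ (X ω) (Xh ω) > t) ≥
      1 - (mutInfo μ X Y + binEnt (pr μ (fun ω => ρ (X ω) (Xh ω) > t))) /
        Real.log ((Fintype.card A : ℝ) / (Ntmax ρ t : ℝ)) :=
  distance_based_fano_mutual_info_general μ hμ X Y Xh hMC hunif ρ hsymm t hNmax
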